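/- arXiv:math/0403156 — 4 statements merged into one kernel-verified Lean document; each statement's English description precedes it below -/
import Mathlib

section
/- If M is a Gorenstein projective R-module, then Ext^m_R(M, T) = 0 for all m > 0 and all R-modules T of finite projective dimension. -/
open CategoryTheory Limits

/-- A module `M` is Gorenstein projective if it is a cokernel in an exact (acyclic)
complex of projective modules which stays exact under `Hom_R(-, Q)` for every
projective module `Q` (a complete projective resolution). -/
def IsGorensteinProjective (R : Type) [Ring R] (M : Type) [AddCommGroup M] [Module R M] :
    Prop :=
  ∃ C : ChainComplex (ModuleCat.{0} R) ℤ,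
    (∀ n : ℤ, C.ExactAt n) ∧
    (∀ n : ℤ, Module.Projective R (C.X n)) ∧
    Nonempty (M ≃ₗ[R] ((C.X 0) ⧸ LinearMap.range ((C.d 1 0).hom : C.X 1 →ₗ[R] C.X 0))) ∧
    (∀ (Q : Type) (_ : AddCommGroup Q) (_ : Module R Q), Module.Projective R Q →
      ∀ (n : ℤ) (f : C.X n →ₗ[R] Q),
        f.comp ((C.d (n + 1) n).hom : C.X (n + 1) →ₗ[R] C.X n) = 0 →
          ∃ g : C.X (n - 1) →ₗ[R] Q,
            g.comp ((C.d n (n - 1)).hom : C.X n →ₗ[R] C.X (n - 1)) = f)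

/-- A module `N` is Gorenstein injective if it is a kernel in an exact (acyclic)
complex of injective modules which stays exact under `Hom_R(J, -)` for every
injective module `J` (a complete injective resolution). -/
def IsGorensteinInjective (R : Type) [Ring R] (N : Type) [AddCommGroup N] [Module R N] :
    Prop :=
  ∃ C : ChainComplex (ModuleCat.{0} R) ℤ,
    (∀ n : ℤ, C.ExactAt n) ∧
    (∀ n : ℤ, Module.Injective R (C.X n)) ∧
    Nonempty (N ≃ₗ[R] LinearMap.ker ((C.d 0 (-1)).hom : C.X 0 →ₗ[R] C.X (-1))) ∧
    (∀ (J : Type) (_ : AddCommGroup J) (_ : Module R J), Module.Injective R J →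
      ∀ (n : ℤ) (f : J →ₗ[R] C.X n),
        ((C.d n (n - 1)).hom : C.X n →ₗ[R] C.X (n - 1)).comp f = 0 →
          ∃ g : J →ₗ[R] C.X (n + 1),
            ((C.d (n + 1) n).hom : C.X (n + 1) →ₗ[R] C.X n).comp g = f)

/-- `M` has projective dimension at most `n`: there is an exact complex
`0 → P_n → ⋯ → P_0 → M → 0` with each `P_i` projective, encoded as an acyclic
complex with `M` placed in degree `-1` and projectives in degrees `0, …, n`. -/
def HasProjDimLE (R : Type) [Ring R] (M : Type) [AddCommGroup M] [Module R M]
    (n : ℕ) : Prop :=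
  ∃ C : ChainComplex (ModuleCat.{0} R) ℤ,
    (∀ i : ℤ, C.ExactAt i) ∧
    Nonempty (M ≃ₗ[R] C.X (-1)) ∧
    (∀ i : ℤ, 0 ≤ i → Module.Projective R (C.X i)) ∧
    (∀ i : ℤ, i < -1 ∨ (n : ℤ) < i → IsZero (C.X i))

/-- `M` has finite projective dimension. -/
def HasFinProjDim (R : Type) [Ring R] (M : Type) [AddCommGroup M] [Module R M] : Prop :=
  ∃ n : ℕ, HasProjDimLE R M n

/-- `M` has injective dimension at most `n`: there is an exact complex
`0 → M → I^0 → ⋯ → I^n → 0` with each `I^j` injective, encoded as an acyclic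
complex with `M` placed in degree `1` and injectives in degrees `0, -1, …, -n`. -/
def HasInjDimLE (R : Type) [Ring R] (M : Type) [AddCommGroup M] [Module R M]
    (n : ℕ) : Prop :=
  ∃ C : ChainComplex (ModuleCat.{0} R) ℤ,
    (∀ i : ℤ, C.ExactAt i) ∧
    Nonempty (M ≃ₗ[R] C.X 1) ∧
    (∀ i : ℤ, i ≤ 0 → Module.Injective R (C.X i)) ∧
    (∀ i : ℤ, 1 < i ∨ i < -(n : ℤ) → IsZero (C.X i))

/-- `M` has finite injective dimension. -/
def HasFinInjDim (R : Type) [Ring R] (M : Type) [AddCommGroup M] [Module R M] : Prop :=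
  ∃ n : ℕ, HasInjDimLE R M n

/-!
`Ext^m_R(M, T)` for `m > 0` is computed by the part in nonnegative degrees of a complete projective
resolution `C` of `M`, so it vanishes as soon as `Hom_R(C, T)` is exact. This holds for projective
`T` by assumption, and it propagates along a finite projective resolution
`0 → P_n → ⋯ → P_0 → T → 0` from the left: if `P → N` is surjective with kernel `K`, then
exactness of `Hom_R(C, K)` and `Hom_R(C, P)` gives exactness of `Hom_R(C, N)`, because the
terms of `C` are projective.
-/

namespace ChainComplex

variable {R : Type} [Ring R]

/-- `Hom_R(C, N)` is exact. The indices are tied by equations rather than written as `j + 1` and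
`j - 1`, so that the property applies at indices that are only propositionally of that form. -/
def HomExact (C : ChainComplex (ModuleCat.{0} R) ℤ) (N : Type) [AddCommGroup N] [Module R N] :
    Prop :=
  ∀ i j k : ℤ, i = j + 1 → k = j - 1 → ∀ f : C.X j →ₗ[R] N,
    f ∘ₗ (C.d i j).hom = 0 → ∃ g : C.X k →ₗ[R] N, g ∘ₗ (C.d j k).hom = f

variable {C D : ChainComplex (ModuleCat.{0} R) ℤ}
  {N N' P : Type} [AddCommGroup N] [Module R N] [AddCommGroup N'] [Module R N']
  [AddCommGroup P] [Module R P]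

lemma homExact_iff :
    C.HomExact N ↔ ∀ (j : ℤ) (f : C.X j →ₗ[R] N), f ∘ₗ (C.d (j + 1) j).hom = 0 →
      ∃ g : C.X (j - 1) →ₗ[R] N, g ∘ₗ (C.d j (j - 1)).hom = f :=
  ⟨fun h j => h _ j _ rfl rfl, fun h => by rintro i j k rfl rfl; exact h j⟩

lemma d_comp_d_hom (i j k : ℤ) : (C.d j k).hom ∘ₗ (C.d i j).hom = 0 :=
  congrArg ModuleCat.Hom.hom (C.d_comp_d i j k)

lemma exists_d_apply_eq_of_exactAt {i j k : ℤ} (hD : D.ExactAt j) (hi : i = j + 1)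
    (hk : k = j - 1) {x : D.X j} (hx : (D.d j k).hom x = 0) :
    ∃ y, (D.d i j).hom y = x := by
  subst hi hk
  rw [HomologicalComplex.exactAt_iff' D (j + 1) j (j - 1) (by simp) (by simp),
    ShortComplex.moduleCat_exact_iff] at hD
  exact hD x hx

namespace HomExact

lemma of_subsingleton [Subsingleton N] : C.HomExact N :=
  fun _ _ _ _ _ _ _ => ⟨0, Subsingleton.elim _ _⟩

lemma of_linearEquiv (e : N ≃ₗ[R] N') (h : C.HomExact N) : C.HomExact N' := by
  intro i j k hi hk f hf
  obtain ⟨g, hg⟩ := h i j k hi hk (e.symm.toLinearMap ∘ₗ f)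
    (by rw [LinearMap.comp_assoc, hf, LinearMap.comp_zero])
  refine ⟨e.toLinearMap ∘ₗ g, ?_⟩
  rw [LinearMap.comp_assoc, hg, ← LinearMap.comp_assoc, e.comp_symm, LinearMap.id_comp]

lemma of_surjective (hC : ∀ n, Module.Projective R (C.X n)) (hP : C.HomExact P)
    {p : P →ₗ[R] N} (hp : Function.Surjective p) (hK : C.HomExact (LinearMap.ker p)) :
    C.HomExact N := by
  rintro i j k rfl rfl f hf
  obtain ⟨f', hf'⟩ := Module.projective_lifting_property p f hp
  have hmem : ∀ x, f' ((C.d (j + 1) j).hom x) ∈ LinearMap.ker p := fun x => by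
    rw [LinearMap.mem_ker, ← LinearMap.comp_apply p, hf', ← LinearMap.comp_apply, hf,
      LinearMap.zero_apply]
  obtain ⟨s, hs⟩ := hK (j + 1 + 1) (j + 1) j rfl (by ring)
    (LinearMap.codRestrict _ (f' ∘ₗ (C.d (j + 1) j).hom) hmem) (by
      ext x
      simp [← LinearMap.comp_apply (C.d (j + 1) j).hom, d_comp_d_hom])
  obtain ⟨g, hg⟩ := hP (j + 1) j (j - 1) rfl rfl (f' - (LinearMap.ker p).subtype ∘ₗ s) (by
    ext x
    have hsx := congrArg Subtype.val (LinearMap.congr_fun hs x)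
    simp only [LinearMap.comp_apply, LinearMap.codRestrict_apply] at hsx
    simp [hsx])
  refine ⟨p ∘ₗ g, ?_⟩
  rw [LinearMap.comp_assoc, hg, LinearMap.comp_sub, hf', ← LinearMap.comp_assoc,
    LinearMap.comp_ker_subtype, LinearMap.zero_comp, sub_zero]

lemma ker_d_sub_one (hC : ∀ n, Module.Projective R (C.X n)) {j : ℤ} (hD : D.ExactAt (j - 1))
    (hX : C.HomExact (D.X j)) (hZ : C.HomExact (LinearMap.ker (D.d j (j - 1)).hom)) :
    C.HomExact (LinearMap.ker (D.d (j - 1) (j - 1 - 1)).hom) := by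
  have hmem : ∀ x, (D.d j (j - 1)).hom x ∈ LinearMap.ker (D.d (j - 1) (j - 1 - 1)).hom :=
    fun x => by rw [LinearMap.mem_ker, ← LinearMap.comp_apply, d_comp_d_hom, LinearMap.zero_apply]
  let p := LinearMap.codRestrict _ (D.d j (j - 1)).hom hmem
  have hp : Function.Surjective p := by
    rintro ⟨y, hy⟩
    obtain ⟨x, rfl⟩ := exists_d_apply_eq_of_exactAt hD (by ring) rfl hy
    exact ⟨x, rfl⟩
  refine of_surjective hC hX hp (of_linearEquiv (LinearEquiv.ofEq _ _ ?_) hZ)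
  exact (LinearMap.ker_codRestrict _ _ _).symm

lemma ker_d_of_isZero (hC : ∀ n, Module.Projective R (C.X n)) (hD : ∀ i, D.ExactAt i)
    (hD₀ : ∀ i, 0 ≤ i → C.HomExact (D.X i)) {n : ℤ} (hn : IsZero (D.X n)) :
    ∀ j ≤ n, -1 ≤ j → C.HomExact (LinearMap.ker (D.d j (j - 1)).hom) := by
  refine Int.leInductionDown (fun _ => ?_) (fun j _ ih hj => ?_)
  · have := ModuleCat.subsingleton_of_isZero hn
    exact of_subsingleton
  · exact ker_d_sub_one hC (hD _) (hD₀ j (by omega)) (ih (by omega))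

lemma of_hasProjDimLE (hC : ∀ n, Module.Projective R (C.X n))
    (hproj : ∀ (Q : Type) [AddCommGroup Q] [Module R Q], Module.Projective R Q → C.HomExact Q)
    {T : Type} [AddCommGroup T] [Module R T] {n : ℕ} (hT : HasProjDimLE R T n) :
    C.HomExact T := by
  obtain ⟨D, hD, ⟨e⟩, hDproj, hDzero⟩ := hT
  have hZ := ker_d_of_isZero hC hD (fun i hi => hproj _ (hDproj i hi))
    (hDzero (n + 1) (by omega)) (-1) (by omega) le_rfl
  have hd : D.d (-1) (-1 - 1) = 0 := (hDzero (-1 - 1) (by omega)).eq_of_tgt _ _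
  rw [hd, ModuleCat.hom_zero, LinearMap.ker_zero] at hZ
  exact of_linearEquiv (Submodule.topEquiv.trans e.symm) hZ

end HomExact

variable (C) in
noncomputable def restrictNat : ChainComplex (ModuleCat.{0} R) ℕ :=
  ChainComplex.of (fun n => C.X n) (fun n => C.d (n + 1 : ℕ) n) (fun _ => C.d_comp_d _ _ _)

lemma restrictNat_d (n : ℕ) : C.restrictNat.d (n + 1) n = C.d (n + 1 : ℕ) n := by
  simp [restrictNat]

lemma restrictNat_exactAt_succ (hC : ∀ n, C.ExactAt n) (n : ℕ) :
    C.restrictNat.ExactAt (n + 1) := by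
  rw [HomologicalComplex.exactAt_iff' _ (n + 2) (n + 1) n (by simp) (by simp),
    ShortComplex.moduleCat_exact_iff]
  intro x hx
  rw [HomologicalComplex.shortComplexFunctor'_obj_g, restrictNat_d] at hx
  obtain ⟨y, hy⟩ := exists_d_apply_eq_of_exactAt (hC _) (i := ((n + 2 : ℕ) : ℤ))
    (by push_cast; ring) (by push_cast; ring) hx
  exact ⟨y, by rwa [HomologicalComplex.shortComplexFunctor'_obj_f, restrictNat_d]⟩

noncomputable def projectiveResolutionOfCokernel {M : ModuleCat.{0} R} (hC : ∀ n, C.ExactAt n)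
    (hproj : ∀ n, Module.Projective R (C.X n))
    (e : M ≃ₗ[R] C.X 0 ⧸ LinearMap.range (C.d 1 0).hom) : ProjectiveResolution M :=
  let p : C.X 0 →ₗ[R] M := e.symm.toLinearMap ∘ₗ (LinearMap.range (C.d 1 0).hom).mkQ
  have hker : LinearMap.ker p = LinearMap.range (C.d 1 0).hom := by
    rw [LinearEquiv.ker_comp, Submodule.ker_mkQ]
  { complex := C.restrictNat
    projective n := (IsProjective.iff_projective _).1 (hproj n)
    π := (ChainComplex.toSingle₀Equiv _ _).symm ⟨ModuleCat.ofHom p, by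
      ext x
      rw [restrictNat_d]
      exact LinearMap.mem_ker.1 (hker.ge ⟨x, rfl⟩)⟩
    quasiIso := ⟨fun n => by
      cases n with
      | zero =>
        rw [ChainComplex.quasiIsoAt₀_iff, ShortComplex.quasiIso_iff_of_zeros' _ rfl rfl rfl]
        constructor
        · rw [ShortComplex.moduleCat_exact_iff_ker_sub_range]
          exact hker.le
        · exact (ModuleCat.epi_iff_surjective (ModuleCat.ofHom p)).2
            (e.symm.surjective.comp (Submodule.mkQ_surjective _))
      | succ n =>
        rw [quasiIsoAt_iff_exactAt' _ _ (ChainComplex.exactAt_succ_single_obj _ _)]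
        exact restrictNat_exactAt_succ hC n⟩ }

lemma HomExact.exactAt_linearYonedaObj {T : ModuleCat.{0} R} (h : C.HomExact T) (k : ℕ) :
    (C.restrictNat.linearYonedaObj ℤ T).ExactAt (k + 1) := by
  rw [HomologicalComplex.exactAt_iff' _ k (k + 1) (k + 2) (by simp) (by simp),
    ShortComplex.moduleCat_exact_iff]
  intro f hf
  rw [HomologicalComplex.shortComplexFunctor'_obj_g, linearYonedaObj_d, restrictNat_d] at hf
  obtain ⟨g, hg⟩ := h ((k + 2 : ℕ) : ℤ) ((k + 1 : ℕ) : ℤ) k (by push_cast; ring)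
    (by push_cast; ring) f.hom (congrArg ModuleCat.Hom.hom hf)
  refine ⟨ModuleCat.ofHom g, ?_⟩
  rw [HomologicalComplex.shortComplexFunctor'_obj_f, linearYonedaObj_d, restrictNat_d]
  exact ModuleCat.hom_ext hg

end ChainComplex

/-- If `M` is a Gorenstein projective `R`-module, then `Ext^m_R(M, T) = 0` for all
`m > 0` and all `R`-modules `T` of finite projective dimension. -/
theorem ext_vanishes_of_gorensteinProjective_of_finProjDim
    (R : Type) [Ring R] (M T : ModuleCat.{0} R)
    (hM : IsGorensteinProjective R M) (hT : HasFinProjDim R T)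
    (m : ℕ) (hm : 0 < m) :
    Subsingleton (((Ext ℤ (ModuleCat.{0} R) m).obj (Opposite.op M)).obj T) := by
  obtain ⟨C, hC, hproj, ⟨e⟩, hlift⟩ := hM
  obtain ⟨n, hT⟩ := hT
  have hCT : C.HomExact T :=
    ChainComplex.HomExact.of_hasProjDimLE hproj
      (fun Q _ _ hQ => ChainComplex.homExact_iff.2 (hlift Q _ _ hQ)) hT
  obtain ⟨k, rfl⟩ := Nat.exists_eq_add_one.2 hm
  exact ModuleCat.subsingleton_of_isZero <|
    ((hCT.exactAt_linearYonedaObj k).isZero_homology).of_iso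
      ((ChainComplex.projectiveResolutionOfCokernel hC hproj e).isoExt (k + 1) T)
end

section
/- If M is a Gorenstein projective R-module, then Ext^m_R(M, T) = 0 for all m > 0 and all R-modules T of finite injective dimension. -/
open CategoryTheory Limits

/-!
The nonnegative part of a complete projective resolution of `M` is a projective resolution of `M`,
so `Ext^m(M, T)` is the cohomology of `Hom(C_{≥0}, T)`; it therefore suffices that `Hom(C, T)` is
exact for every acyclic complex `C` of projectives. For `T` injective this is the extension
property of `T`. In general, take an injective coresolution `0 → T → I⁰ → ⋯ → Iⁿ → 0` and descend
along `0 → Kʲ → Iʲ → Kʲ⁺¹ → 0`: a cocycle `f : Cⱼ → Kʲ` extends to `φ : Cⱼ₋₁ → Iʲ`, the image of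
`φ` in `Kʲ⁺¹` is a cocycle, hence a coboundary `u ∘ d`, and lifting `u` to `Iʲ` (possible since
`C` is projective) corrects `φ` to a map landing in `Kʲ`.
-/

@[simps!]
def ComplexShape.embeddingDownNatDownInt :
    (ComplexShape.down ℕ).Embedding (ComplexShape.down ℤ) :=
  ComplexShape.Embedding.mk' _ _ (fun n => n) (fun _ _ h => by simpa using h)
    (by intro i j; simp; omega)

instance : ComplexShape.embeddingDownNatDownInt.IsRelIff where
  rel' i j h := by simp at h ⊢; omega

theorem ChainComplex.exactAt_succ_restriction_embeddingDownNatDownInt {V : Type*} [Category* V]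
    [Abelian V] (C : ChainComplex V ℤ) (n : ℕ) (h : C.ExactAt (n + 1 : ℕ)) :
    (C.restriction ComplexShape.embeddingDownNatDownInt).ExactAt (n + 1) := by
  rw [HomologicalComplex.exactAt_iff' _ (n + 2) (n + 1) n (by simp) (by simp)]
  rw [HomologicalComplex.exactAt_iff' _ ((n + 2 : ℕ) : ℤ) ((n + 1 : ℕ) : ℤ) n
    (by simp; omega) (by simp)] at h
  exact (ShortComplex.exact_iff_of_iso (HomologicalComplex.restriction.sc'Iso _ _ _ _ _
    rfl rfl rfl (by simp; omega) (by simp))).2 h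

namespace CategoryTheory.ProjectiveResolution

noncomputable def ofExact {C : Type*} [Category* C] [Abelian C] {Z : C} (P : ChainComplex C ℕ)
    (hproj : ∀ n, Projective (P.X n)) (hexact : ∀ n, P.ExactAt (n + 1)) (π : P.X 0 ⟶ Z)
    (hπ : P.d 1 0 ≫ π = 0) (hexact₀ : (ShortComplex.mk _ _ hπ).Exact) (hepi : Epi π) :
    ProjectiveResolution Z where
  complex := P
  projective := hproj
  π := (ChainComplex.toSingle₀Equiv _ _).symm ⟨π, hπ⟩
  quasiIso := ⟨fun n => by
    cases n
    · rw [ChainComplex.quasiIsoAt₀_iff, ShortComplex.quasiIso_iff_of_zeros']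
      · simp only [HomologicalComplex.shortComplexFunctor'_map_τ₂,
          ChainComplex.toSingle₀Equiv_symm_apply_f_zero]
        exact ⟨hexact₀, hepi⟩
      · exact P.shape 0 0 (by simp)
      all_goals rfl
    · rw [quasiIsoAt_iff_exactAt']
      · exact hexact _
      · exact ChainComplex.exactAt_succ_single_obj _ _⟩

noncomputable def ofLinearEquivQuotient {R : Type} [Ring R]
    (P : ChainComplex (ModuleCat.{0} R) ℕ) (hproj : ∀ n, Module.Projective R (P.X n))
    (hexact : ∀ n, P.ExactAt (n + 1)) {M : ModuleCat.{0} R}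
    (e : M ≃ₗ[R] P.X 0 ⧸ LinearMap.range (P.d 1 0).hom) : ProjectiveResolution M :=
  ofExact P (fun n => (IsProjective.iff_projective _).1 (hproj n)) hexact
    (ModuleCat.ofHom (e.symm.toLinearMap ∘ₗ (LinearMap.range (P.d 1 0).hom).mkQ))
    (by ext; simp)
    (by
      rw [ShortComplex.moduleCat_exact_iff_range_eq_ker]
      simp [LinearMap.ker_comp])
    (by
      rw [ModuleCat.epi_iff_surjective]
      exact e.symm.surjective.comp (Submodule.mkQ_surjective _))

theorem isZero_ext_succ_of_exists_comp_eq {R : Type*} [Ring R] {C : Type*} [Category* C]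
    [Abelian C] [Linear R C] [EnoughProjectives C] {X : C} (P : ProjectiveResolution X) (Y : C)
    (n : ℕ) (h : ∀ f : P.complex.X (n + 1) ⟶ Y, P.complex.d (n + 2) (n + 1) ≫ f = 0 →
      ∃ g : P.complex.X n ⟶ Y, P.complex.d (n + 1) n ≫ g = f) :
    IsZero (((Ext R C (n + 1)).obj (Opposite.op X)).obj Y) := by
  refine IsZero.of_iso ?_ (P.isoExt (n + 1) Y)
  rw [← HomologicalComplex.exactAt_iff_isZero_homology,
    HomologicalComplex.exactAt_iff' _ n (n + 1) (n + 2) (by simp) (by simp),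
    ShortComplex.moduleCat_exact_iff]
  intro f hf
  obtain ⟨g, rfl⟩ := h f hf
  exact ⟨g, rfl⟩

end CategoryTheory.ProjectiveResolution

section HomExactness

variable {R : Type} [Ring R]

theorem ChainComplex.range_d_eq_ker_d {C : ChainComplex (ModuleCat.{0} R) ℤ} {i j k : ℤ}
    (hij : i = j + 1) (hjk : j = k + 1) (h : C.ExactAt j) :
    LinearMap.range (C.d i j).hom = LinearMap.ker (C.d j k).hom :=
  (ShortComplex.moduleCat_exact_iff_range_eq_ker _).1 <|
    (HomologicalComplex.exactAt_iff' C i j k (by simp [hij]) (by simp [hjk])).1 h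

theorem LinearMap.exists_comp_eq_of_ker_le {X Y Q : Type} [AddCommGroup X] [Module R X]
    [AddCommGroup Y] [Module R Y] [AddCommGroup Q] [Module R Q] [Module.Injective R Q]
    (d : X →ₗ[R] Y) (f : X →ₗ[R] Q) (h : LinearMap.ker d ≤ LinearMap.ker f) :
    ∃ g : Y →ₗ[R] Q, g ∘ₗ d = f := by
  obtain ⟨g, hg⟩ := Module.Injective.extension_property R Q _ _
    ((LinearMap.ker d).liftQ d le_rfl)
    (LinearMap.ker_eq_bot.1 (Submodule.ker_liftQ_eq_bot _ _ _ le_rfl))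
    ((LinearMap.ker d).liftQ f h)
  exact ⟨g, by ext x; simpa using congr($hg (Submodule.Quotient.mk x))⟩

def HomExactOnAcyclicProjectives (R : Type) [Ring R] (T : Type) [AddCommGroup T]
    [Module R T] : Prop :=
  ∀ C : ChainComplex (ModuleCat.{0} R) ℤ, (∀ n, C.ExactAt n) →
    (∀ n, Module.Projective R (C.X n)) →
    ∀ i j k : ℤ, i = j + 1 → j = k + 1 → ∀ f : C.X j →ₗ[R] T, f ∘ₗ (C.d i j).hom = 0 →
      ∃ g : C.X k →ₗ[R] T, g ∘ₗ (C.d j k).hom = f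

namespace HomExactOnAcyclicProjectives

variable {A B T : Type} [AddCommGroup A] [Module R A] [AddCommGroup B] [Module R B]
  [AddCommGroup T] [Module R T]

theorem of_linearEquiv (e : A ≃ₗ[R] B) (hB : HomExactOnAcyclicProjectives R B) :
    HomExactOnAcyclicProjectives R A := by
  intro C hC hP i j k hij hjk f hf
  obtain ⟨g, hg⟩ := hB C hC hP i j k hij hjk (e.toLinearMap ∘ₗ f)
    (by rw [LinearMap.comp_assoc, hf, LinearMap.comp_zero])
  exact ⟨e.symm.toLinearMap ∘ₗ g, by
    rw [LinearMap.comp_assoc, hg, ← LinearMap.comp_assoc, LinearEquiv.symm_comp,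
      LinearMap.id_comp]⟩

theorem of_subsingleton [Subsingleton T] : HomExactOnAcyclicProjectives R T :=
  fun _ _ _ _ _ _ _ _ _ _ => ⟨0, Subsingleton.elim _ _⟩

theorem of_injective [Module.Injective R T] : HomExactOnAcyclicProjectives R T := by
  intro C hC _ i j k hij hjk f hf
  refine LinearMap.exists_comp_eq_of_ker_le _ f ?_
  rw [← ChainComplex.range_d_eq_ker_d hij hjk (hC j), LinearMap.range_le_ker_iff]
  exact hf

theorem of_quotient {I : Type} [AddCommGroup I] [Module R I] [Module.Injective R I]
    (K : Submodule R I) (hK : HomExactOnAcyclicProjectives R (I ⧸ K)) :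
    HomExactOnAcyclicProjectives R K := by
  intro C hC hP i j k hij hjk f hf
  obtain ⟨φ, hφ⟩ := of_injective C hC hP i j k hij hjk (K.subtype ∘ₗ f)
    (by rw [LinearMap.comp_assoc, hf, LinearMap.comp_zero])
  have hmkQ : K.mkQ ∘ₗ K.subtype = 0 :=
    LinearMap.range_le_ker_iff.1 (by rw [Submodule.range_subtype, Submodule.ker_mkQ])
  obtain ⟨u, hu⟩ := hK C hC hP j k (k - 1) hjk (by omega) (K.mkQ ∘ₗ φ) (by
    rw [LinearMap.comp_assoc, hφ, ← LinearMap.comp_assoc, hmkQ, LinearMap.zero_comp])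
  have := hP (k - 1)
  obtain ⟨v, hv⟩ := Module.projective_lifting_property K.mkQ u K.mkQ_surjective
  set ψ := φ - v ∘ₗ (C.d k (k - 1)).hom
  have hψ : K.mkQ ∘ₗ ψ = 0 := by
    rw [LinearMap.comp_sub, ← LinearMap.comp_assoc, hv, hu, sub_self]
  have hψK : ∀ x, ψ x ∈ K := fun x => (Submodule.Quotient.mk_eq_zero K).1 congr($hψ x)
  refine ⟨ψ.codRestrict K hψK, ?_⟩
  ext x
  have hdd : (C.d k (k - 1)).hom ((C.d j k).hom x) = 0 := by
    simp [← ModuleCat.comp_apply]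
  simpa [ψ, hdd] using congr($hφ x)

theorem ker_d_of_injective {D : ChainComplex (ModuleCat.{0} R) ℤ} {i j k : ℤ} (hij : i = j + 1)
    (hjk : j = k + 1) [Module.Injective R (D.X i)] (hD : D.ExactAt j)
    (h : HomExactOnAcyclicProjectives R (LinearMap.ker (D.d j k).hom)) :
    HomExactOnAcyclicProjectives R (LinearMap.ker (D.d i j).hom) :=
  of_quotient _ <| of_linearEquiv ((D.d i j).hom.quotKerEquivRange.trans
    (LinearEquiv.ofEq _ _ (ChainComplex.range_d_eq_ker_d hij hjk hD))) h

theorem ker_d_of_injective_of_isZero (D : ChainComplex (ModuleCat.{0} R) ℤ)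
    (hD : ∀ i, D.ExactAt i) (n : ℕ)
    (hinj : ∀ i : ℤ, -(n : ℤ) ≤ i → i ≤ 0 → Module.Injective R (D.X i))
    (hzero : IsZero (D.X (-n - 1))) (j : ℤ) (hj : -(n : ℤ) - 1 ≤ j) (hj0 : j ≤ 0) :
    HomExactOnAcyclicProjectives R (LinearMap.ker (D.d j (j - 1)).hom) := by
  induction j, hj using Int.leInduction with
  | base =>
    have := ModuleCat.subsingleton_of_isZero hzero
    exact of_subsingleton
  | succ j hj ih =>
    have := hinj (j + 1) (by omega) hj0
    rw [add_sub_cancel_right]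
    exact ker_d_of_injective rfl (by ring) (hD j) (ih (by omega))

theorem of_hasInjDimLE {n : ℕ} (hT : HasInjDimLE R T n) : HomExactOnAcyclicProjectives R T := by
  obtain ⟨D, hD, ⟨e⟩, hinj, hzero⟩ := hT
  have := ModuleCat.subsingleton_of_isZero (hzero 2 (Or.inl (by norm_num)))
  have hd₁₀ : Function.Injective (D.d 1 0).hom := by
    rw [← LinearMap.ker_eq_bot, ← ChainComplex.range_d_eq_ker_d (i := 2) (by norm_num) (by norm_num)
      (hD 1), LinearMap.range_eq_bot]
    exact Subsingleton.elim _ _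
  refine of_linearEquiv (e.trans ((LinearEquiv.ofInjective _ hd₁₀).trans (LinearEquiv.ofEq _ _
    (ChainComplex.range_d_eq_ker_d (k := 0 - 1) (by norm_num) (by norm_num) (hD 0))))) ?_
  exact ker_d_of_injective_of_isZero D hD n (fun i _ hi ↦ hinj i hi)
    (hzero _ (Or.inr (by omega))) 0 (by omega) le_rfl

theorem of_hasFinInjDim (hT : HasFinInjDim R T) : HomExactOnAcyclicProjectives R T :=
  let ⟨_, hn⟩ := hT
  of_hasInjDimLE hn

theorem exists_comp_eq {T : ModuleCat.{0} R} (hT : HomExactOnAcyclicProjectives R T)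
    {C : ChainComplex (ModuleCat.{0} R) ℤ} (hC : ∀ n, C.ExactAt n)
    (hP : ∀ n, Module.Projective R (C.X n)) {i j k : ℤ} (hij : i = j + 1) (hjk : j = k + 1)
    (f : C.X j ⟶ T) (hf : C.d i j ≫ f = 0) : ∃ g : C.X k ⟶ T, C.d j k ≫ g = f :=
  let ⟨g, hg⟩ := hT C hC hP i j k hij hjk f.hom congr(ModuleCat.Hom.hom $hf)
  ⟨ModuleCat.ofHom g, ModuleCat.hom_ext hg⟩

end HomExactOnAcyclicProjectives

end HomExactness

/-- If `M` is a Gorenstein projective `R`-module, then `Ext^m_R(M, T) = 0` for all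
`m > 0` and all `R`-modules `T` of finite injective dimension. -/
theorem ext_vanishes_of_gorensteinProjective_of_finInjDim
    (R : Type) [Ring R] (M T : ModuleCat.{0} R)
    (hM : IsGorensteinProjective R M) (hT : HasFinInjDim R T)
    (m : ℕ) (hm : 0 < m) :
    Subsingleton (((Ext ℤ (ModuleCat.{0} R) m).obj (Opposite.op M)).obj T) := by
  obtain ⟨C, hC, hP, ⟨e⟩, -⟩ := hM
  obtain ⟨n, rfl⟩ : ∃ n, m = n + 1 := ⟨m - 1, by omega⟩
  let P := ProjectiveResolution.ofLinearEquivQuotient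
    (C.restriction ComplexShape.embeddingDownNatDownInt) (fun n => hP n)
    (fun n => C.exactAt_succ_restriction_embeddingDownNatDownInt n (hC _)) e
  refine ModuleCat.subsingleton_of_isZero (P.isZero_ext_succ_of_exists_comp_eq T n fun f hf => ?_)
  exact (HomExactOnAcyclicProjectives.of_hasFinInjDim hT).exists_comp_eq hC hP
    (by simp; ring) (by simp) f hf
end

section
/- If N is a Gorenstein injective R-module, then Ext^m_R(T, N) = 0 for all m > 0 and all R-modules T of finite projective dimension or finite injective dimension. -/
open CategoryTheory Limits

/-!
Let `C` be the complete injective resolution of `N`, so that `N` is its module of cycles in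
degree `0`, and call `M` good if `Hom_R(M, C)` is exact, i.e. `Ext¹(M, Z) = 0` for all modules
of cycles `Z` of `C`. Injective modules are good by hypothesis, projective ones because `C` is
exact. As the terms of `C` are injective, in a short exact sequence `0 → K → M → T → 0`
goodness of `K` and `M` implies that of `T`, and goodness of `M` and `T` that of `K`. A finite
projective or injective resolution of `T` thus shows that `T` is good, and then so are the
cokernels `P_k / im d_{k+1}` of a projective resolution `P → T`. Finally, a cocycle
`P_{k+1} → N` extends into `C_0` over `P_k` by injectivity, and goodness of
`P_k / im d_{k+1}` corrects the extension so that it lands in `N`: it is a coboundary.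
-/

open LinearMap

section LinearAlgebra

variable {R : Type} [Ring R] {A B Q X : Type} [AddCommGroup A] [Module R A]
  [AddCommGroup B] [Module R B] [AddCommGroup Q] [Module R Q] [AddCommGroup X] [Module R X]

theorem Module.Injective.exists_comp_eq_of_ker_le [Module.Injective R X] (a : A →ₗ[R] B)
    (f : A →ₗ[R] X) (h : ker a ≤ ker f) : ∃ g : B →ₗ[R] X, g ∘ₗ a = f := by
  obtain ⟨g, hg⟩ := Module.Injective.extension_property R X _ B ((ker a).liftQ a le_rfl)
    (by rw [← ker_eq_bot, Submodule.ker_liftQ_eq_bot _ _ _ le_rfl]) ((ker a).liftQ f h)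
  refine ⟨g, ?_⟩
  ext x
  simpa using congr($hg (Submodule.Quotient.mk x))

theorem Function.Exact.exists_comp_eq {a : A →ₗ[R] B} {q : B →ₗ[R] Q}
    (haq : Function.Exact a q) (hq : Function.Surjective q) (φ : B →ₗ[R] X)
    (hφ : φ ∘ₗ a = 0) : ∃ ψ : Q →ₗ[R] X, ψ ∘ₗ q = φ := by
  refine ⟨(range a).liftQ φ (range_le_ker_iff.2 hφ) ∘ₗ
    (haq.linearEquivOfSurjective hq).symm.toLinearMap, ?_⟩
  ext x
  simp

end LinearAlgebra

namespace HomologicalComplex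

variable {R : Type} [Ring R] {ι : Type} {c : ComplexShape ι}
  (D : HomologicalComplex (ModuleCat.{0} R) c)

theorem hom_d_comp_d (i j k : ι) : (D.d j k).hom ∘ₗ (D.d i j).hom = 0 := by
  rw [← ModuleCat.hom_comp, D.d_comp_d, ModuleCat.hom_zero]

theorem exact_hom_d {i j k : ι} (hD : D.ExactAt j) (hij : c.Rel i j) (hjk : c.Rel j k) :
    Function.Exact (D.d i j).hom (D.d j k).hom := by
  rw [D.exactAt_iff' i j k (c.prev_eq' hij) (c.next_eq' hjk),
    ShortComplex.ShortExact.moduleCat_exact_iff_function_exact] at hD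
  exact hD

def dToKer (i j k : ι) : D.X i →ₗ[R] ker (D.d j k).hom :=
  (D.d i j).hom.codRestrict _ fun x => congr($(D.hom_d_comp_d i j k) x)

theorem exact_subtype_dToKer (i j k : ι) :
    Function.Exact (ker (D.d i j).hom).subtype (D.dToKer i j k) := by
  rw [LinearMap.exact_iff, dToKer, ker_codRestrict, Submodule.range_subtype]

theorem dToKer_surjective {i j k : ι} (hD : D.ExactAt j) (hij : c.Rel i j) (hjk : c.Rel j k) :
    Function.Surjective (D.dToKer i j k) := by
  rintro ⟨x, hx⟩
  obtain ⟨y, rfl⟩ := (D.exact_hom_d hD hij hjk x).1 hx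
  exact ⟨y, rfl⟩

theorem subsingleton_ker_d {i j k : ι} (hD : D.ExactAt j) (hij : c.Rel i j) (hjk : c.Rel j k)
    (hi : IsZero (D.X i)) : Subsingleton (ker (D.d j k).hom) :=
  have := ModuleCat.isZero_iff_subsingleton.1 hi
  (D.dToKer_surjective hD hij hjk).subsingleton

end HomologicalComplex

/-- For an exact complex `C` of injectives this says `Ext¹(M, Z) = 0` for every module of
cycles `Z` of `C`. -/
def HomExact {R : Type} [Ring R] (M : Type) [AddCommGroup M] [Module R M]
    (C : ChainComplex (ModuleCat.{0} R) ℤ) : Prop :=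
  ∀ (n : ℤ) (f : M →ₗ[R] C.X n), (C.d n (n - 1)).hom ∘ₗ f = 0 →
    ∃ g : M →ₗ[R] C.X (n + 1), (C.d (n + 1) n).hom ∘ₗ g = f

namespace HomExact

variable {R : Type} [Ring R] {C : ChainComplex (ModuleCat.{0} R) ℤ}
  {K M T : Type} [AddCommGroup K] [Module R K] [AddCommGroup M] [Module R M]
  [AddCommGroup T] [Module R T]

theorem exists_lift (h : HomExact M C) {i j k : ℤ} (hij : j + 1 = i) (hjk : k + 1 = j)
    (f : M →ₗ[R] C.X j) (hf : (C.d j k).hom ∘ₗ f = 0) :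
    ∃ g : M →ₗ[R] C.X i, (C.d i j).hom ∘ₗ g = f := by
  subst hij
  obtain rfl : k = j - 1 := by omega
  exact h j f hf

theorem of_exists_lift
    (h : ∀ i j k : ℤ, j + 1 = i → k + 1 = j → ∀ f : M →ₗ[R] C.X j,
      (C.d j k).hom ∘ₗ f = 0 → ∃ g : M →ₗ[R] C.X i, (C.d i j).hom ∘ₗ g = f) :
    HomExact M C :=
  fun n => h (n + 1) n (n - 1) rfl (by omega)

theorem of_linearEquiv (e : M ≃ₗ[R] T) (h : HomExact M C) : HomExact T C := by
  intro n f hf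
  obtain ⟨g, hg⟩ := h n (f ∘ₗ e.toLinearMap)
    (by rw [← comp_assoc, hf, LinearMap.zero_comp])
  refine ⟨g ∘ₗ e.symm.toLinearMap, ?_⟩
  rw [← comp_assoc, hg, comp_assoc, LinearEquiv.comp_symm, comp_id]

theorem of_subsingleton [Subsingleton M] : HomExact M C :=
  fun _ _ _ => ⟨0, Subsingleton.elim _ _⟩

theorem of_projective [Module.Projective R M] (hC : ∀ n, C.ExactAt n) : HomExact M C := by
  refine of_exists_lift fun i j k hij hjk f hf => ?_
  obtain ⟨g, hg⟩ := Module.projective_lifting_property (C.dToKer i j k)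
    (f.codRestrict _ fun x => congr($hf x)) (C.dToKer_surjective (hC j) hij hjk)
  exact ⟨g, by ext x; exact congr(($hg x).1)⟩

variable {A : Type} [AddCommGroup A] [Module R A]

/-- By injectivity `f` extends along `a` into `C.X j`; exactness of `Hom(T, C)` provides a
correction, factoring through `p`, that moves the extension into the cycles. -/
theorem exists_extension (hT : HomExact T C) {j k : ℤ} (hjk : k + 1 = j)
    (hinj : Module.Injective R (C.X j)) {a : A →ₗ[R] M} {p : M →ₗ[R] T}
    (hexact : Function.Exact a p) (hp : Function.Surjective p)
    (f : A →ₗ[R] C.X j) (hf : (C.d j k).hom ∘ₗ f = 0) (hker : ker a ≤ ker f) :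
    ∃ g : M →ₗ[R] C.X j, (C.d j k).hom ∘ₗ g = 0 ∧ g ∘ₗ a = f := by
  obtain ⟨h, hha⟩ := Module.Injective.exists_comp_eq_of_ker_le a f hker
  obtain ⟨u, hu⟩ := hexact.exists_comp_eq hp ((C.d j k).hom ∘ₗ h)
    (by rw [comp_assoc, hha, hf])
  have hdu : (C.d k (k - 1)).hom ∘ₗ u = 0 := by
    rw [← LinearMap.cancel_right hp, comp_assoc, hu, ← comp_assoc, C.hom_d_comp_d,
      LinearMap.zero_comp, LinearMap.zero_comp]
  obtain ⟨v, hv⟩ := hT.exists_lift hjk (by omega) u hdu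
  refine ⟨h - v ∘ₗ p, ?_, ?_⟩
  · rw [comp_sub, ← comp_assoc, hv, hu, sub_self]
  · rw [sub_comp, hha, comp_assoc, hexact.linearMap_comp_eq_zero, LinearMap.comp_zero, sub_zero]

variable {ι : K →ₗ[R] M} {p : M →ₗ[R] T}

theorem of_exact_of_middle_of_right (hinj : ∀ n, Module.Injective R (C.X n))
    (hι : Function.Injective ι) (hexact : Function.Exact ι p) (hp : Function.Surjective p)
    (hM : HomExact M C) (hT : HomExact T C) : HomExact K C := by
  refine of_exists_lift fun i j k hij hjk f hf => ?_
  obtain ⟨g, hg, hgι⟩ := hT.exists_extension hjk (hinj j) hexact hp f hf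
    (by rw [ker_eq_bot.2 hι]; exact bot_le)
  obtain ⟨g', hg'⟩ := hM.exists_lift hij hjk g hg
  exact ⟨g' ∘ₗ ι, by rw [← comp_assoc, hg', hgι]⟩

theorem of_exact_of_left_of_middle (hinj : ∀ n, Module.Injective R (C.X n))
    (hι : Function.Injective ι) (hexact : Function.Exact ι p) (hp : Function.Surjective p)
    (hK : HomExact K C) (hM : HomExact M C) : HomExact T C := by
  refine of_exists_lift fun i j k hij hjk f hf => ?_
  obtain ⟨h, hh⟩ := hM.exists_lift hij hjk (f ∘ₗ p)
    (by rw [← comp_assoc, hf, LinearMap.zero_comp])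
  obtain ⟨v, hv⟩ := hK.exists_lift rfl hij (h ∘ₗ ι)
    (by rw [← comp_assoc, hh, comp_assoc, hexact.linearMap_comp_eq_zero, LinearMap.comp_zero])
  obtain ⟨w, hw⟩ := Module.Injective.extension_property R (C.X (i + 1)) K M ι hι v
  obtain ⟨g, hg⟩ := hexact.exists_comp_eq hp (h - (C.d (i + 1) i).hom ∘ₗ w)
    (by rw [sub_comp, comp_assoc, hw, hv, sub_self])
  refine ⟨g, (LinearMap.cancel_right hp).1 ?_⟩
  rw [comp_assoc, hg, comp_sub, ← comp_assoc, C.hom_d_comp_d, LinearMap.zero_comp, sub_zero, hh]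

end HomExact

section Dimension

variable {R : Type} [Ring R] {C : ChainComplex (ModuleCat.{0} R) ℤ} {M : Type} [AddCommGroup M]
  [Module R M] {n : ℕ}

theorem homExact_of_hasProjDimLE (hC : ∀ i, C.ExactAt i)
    (hinj : ∀ i, Module.Injective R (C.X i))
    (hM : HasProjDimLE R M n) : HomExact M C := by
  obtain ⟨D, hD, ⟨e⟩, hproj, hzero⟩ := hM
  have hcycles : ∀ i ≤ (n : ℤ), -1 ≤ i → HomExact (ker (D.d i (i - 1)).hom) C := by
    refine Int.leInductionDown ?_ fun i _ ih hi => ?_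
    · intro _
      have := D.subsingleton_ker_d (i := n + 1) (k := n - 1) (hD n) rfl (by simp)
        (hzero _ (.inr (by omega)))
      exact HomExact.of_subsingleton
    · have := hproj i (by omega)
      exact HomExact.of_exact_of_left_of_middle hinj (Submodule.injective_subtype _)
        (D.exact_subtype_dToKer i (i - 1) (i - 1 - 1))
        (D.dToKer_surjective (hD _) (by simp) (by simp)) (ih (by omega)) (.of_projective hC)
  have htop : ker (D.d (-1) (-1 - 1)).hom = ⊤ := by
    have := ModuleCat.isZero_iff_subsingleton.1 (hzero (-1 - 1) (.inl (by omega)))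
    exact ker_eq_top.2 (Subsingleton.elim _ _)
  exact (hcycles (-1) (by omega) le_rfl).of_linearEquiv ((LinearEquiv.ofTop _ htop).trans e.symm)

theorem homExact_of_hasInjDimLE (hinj : ∀ i, Module.Injective R (C.X i))
    (hGI : ∀ (J : Type) (_ : AddCommGroup J) (_ : Module R J), Module.Injective R J →
      HomExact J C)
    (hM : HasInjDimLE R M n) : HomExact M C := by
  obtain ⟨D, hD, ⟨e⟩, hinjD, hzero⟩ := hM
  have hcycles :
      ∀ i, -(n : ℤ) - 2 ≤ i → i ≤ -1 → HomExact (ker (D.d (i + 1) i).hom) C := by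
    refine Int.leInduction ?_ fun i _ ih hi => ?_
    · intro _
      have := ModuleCat.isZero_iff_subsingleton.1 (hzero (-(n : ℤ) - 2 + 1) (.inr (by omega)))
      exact HomExact.of_subsingleton
    · exact HomExact.of_exact_of_middle_of_right hinj (Submodule.injective_subtype _)
        (D.exact_subtype_dToKer (i + 1 + 1) (i + 1) i)
        (D.dToKer_surjective (hD _) rfl rfl) (hGI _ _ _ (hinjD _ (by omega))) (ih (by omega))
  have hbij : Function.Bijective (D.dToKer 1 0 (-1)) := by
    refine ⟨?_, D.dToKer_surjective (hD 0) rfl rfl⟩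
    rw [← ker_eq_bot, HomologicalComplex.dToKer, ker_codRestrict,
      (D.exact_hom_d (i := 2) (k := 0) (hD 1) rfl rfl).linearMap_ker_eq, range_eq_bot]
    exact congr(ModuleCat.Hom.hom $((hzero 2 (.inl (by omega))).eq_of_src _ _))
  exact (hcycles (-1) (by omega) le_rfl).of_linearEquiv
    ((LinearEquiv.ofBijective _ hbij).symm.trans e.symm)

end Dimension

section Resolution

variable {R : Type} [Ring R] {T : ModuleCat.{0} R} (P : ProjectiveResolution T)

theorem CategoryTheory.ProjectiveResolution.subsingleton_ext_succ {N : ModuleCat.{0} R} (k : ℕ)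
    (h : ∀ x : P.complex.X (k + 1) →ₗ[R] N, x ∘ₗ (P.complex.d (k + 2) (k + 1)).hom = 0 →
      ∃ y : P.complex.X k →ₗ[R] N, y ∘ₗ (P.complex.d (k + 1) k).hom = x) :
    Subsingleton (((Ext ℤ (ModuleCat.{0} R) (k + 1)).obj (Opposite.op T)).obj N) := by
  have hexact : (P.complex.linearYonedaObj ℤ N).ExactAt (k + 1) := by
    rw [HomologicalComplex.exactAt_iff' _ k (k + 1) (k + 2) (by simp) (by simp),
      ShortComplex.moduleCat_exact_iff]
    intro x hx
    obtain ⟨y, hy⟩ := h x.hom congr(ModuleCat.Hom.hom $hx)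
    exact ⟨ModuleCat.ofHom y, ModuleCat.hom_ext hy⟩
  rw [← ModuleCat.isZero_iff_subsingleton]
  exact (hexact.isZero_homology).of_iso (P.isoExt (k + 1) N)

variable {C : ChainComplex (ModuleCat.{0} R) ℤ} (hC : ∀ n, C.ExactAt n)
  (hinj : ∀ n, Module.Injective R (C.X n)) (hT : HomExact T C)
include hC hinj hT

theorem CategoryTheory.ProjectiveResolution.homExact_quotient_range_d (k : ℕ) :
    HomExact (P.complex.X k ⧸ range (P.complex.d (k + 1) k).hom) C := by
  induction k with
  | zero =>
    have hexact : Function.Exact (P.complex.d 1 0).hom (P.π.f 0).hom :=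
      (ShortComplex.ShortExact.moduleCat_exact_iff_function_exact _).1 P.exact₀
    have hπ : Function.Surjective (P.π.f 0).hom :=
      (ModuleCat.epi_iff_surjective _).1 inferInstance
    exact hT.of_linearEquiv (hexact.linearEquivOfSurjective hπ).symm
  | succ k ih =>
    have hexact := P.complex.exact_hom_d (P.complex_exactAt_succ k) (i := k + 2) rfl rfl
    let ι := (range (P.complex.d (k + 2) (k + 1)).hom).liftQ (P.complex.d (k + 1) k).hom
      (range_le_ker_iff.2 (P.complex.hom_d_comp_d _ _ _))
    have hι : Function.Exact ι (range (P.complex.d (k + 1) k).hom).mkQ := by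
      rw [← Function.Surjective.comp_exact_iff_exact (Submodule.mkQ_surjective _)]
      exact exact_map_mkQ_range _
    exact .of_exact_of_middle_of_right hinj (injective_range_liftQ_of_exact hexact) hι
      (Submodule.mkQ_surjective _) (.of_projective hC) ih

theorem CategoryTheory.ProjectiveResolution.exists_comp_d_eq_of_homExact {N : Type}
    [AddCommGroup N] [Module R N] (eN : N ≃ₗ[R] ker (C.d 0 (-1)).hom) (k : ℕ)
    (x : P.complex.X (k + 1) →ₗ[R] N) (hx : x ∘ₗ (P.complex.d (k + 2) (k + 1)).hom = 0) :
    ∃ y : P.complex.X k →ₗ[R] N, y ∘ₗ (P.complex.d (k + 1) k).hom = x := by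
  let f := (ker (C.d 0 (-1)).hom).subtype ∘ₗ eN.toLinearMap ∘ₗ x
  have hf : (C.d 0 (-1)).hom ∘ₗ f = 0 := by
    ext p
    exact (eN (x p)).2
  have hker : ker (P.complex.d (k + 1) k).hom ≤ ker f := by
    rw [(P.complex.exact_hom_d (P.complex_exactAt_succ k) (i := k + 2) rfl rfl).linearMap_ker_eq,
      range_le_ker_iff]
    simp only [f, comp_assoc, hx, LinearMap.comp_zero]
  obtain ⟨g, hg, hgd⟩ := (P.homExact_quotient_range_d hC hinj hT k).exists_extension
    (by norm_num) (hinj 0) (exact_map_mkQ_range _) (Submodule.mkQ_surjective _) f hf hker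
  refine ⟨eN.symm.toLinearMap ∘ₗ g.codRestrict _ fun p => congr($hg p), ?_⟩
  ext p
  apply eN.injective
  ext
  simpa [f] using congr($hgd p)

end Resolution

/-- If `N` is a Gorenstein injective `R`-module, then `Ext^m_R(T, N) = 0` for all
`m > 0` and all `R`-modules `T` of finite projective dimension or finite injective
dimension. -/
theorem ext_vanishes_of_gorensteinInjective
    (R : Type) [Ring R] (N T : ModuleCat.{0} R)
    (hN : IsGorensteinInjective R N) (hT : HasFinProjDim R T ∨ HasFinInjDim R T)
    (m : ℕ) (hm : 0 < m) :
    Subsingleton (((Ext ℤ (ModuleCat.{0} R) m).obj (Opposite.op T)).obj N) := by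
  obtain ⟨C, hC, hinj, ⟨eN⟩, hGI⟩ := hN
  have hTC : HomExact T C := by
    rcases hT with ⟨n, hn⟩ | ⟨n, hn⟩
    · exact homExact_of_hasProjDimLE hC hinj hn
    · exact homExact_of_hasInjDimLE hinj hGI hn
  obtain ⟨k, rfl⟩ : ∃ k, m = k + 1 := ⟨m - 1, by omega⟩
  let P := ProjectiveResolution.of T
  exact P.subsingleton_ext_succ k
    (P.exists_comp_d_eq_of_homExact hC hinj hTC eN k)
end

section
/- Let X and Y be chain complexes of R-modules, with either X bounded on the right (X_n = 0 for n << 0) or Y bounded on the right. If the complex Hom_R(X_l, Y) is exact for every l ∈ ℤ, then the total Hom complex Hom_R(X, Y) is exact. -/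
/-!
A cocycle `z` of degree `n` in `Hom(K, L)` vanishes in all large degrees `p`, so one can build a
primitive `β` by descending induction on `p`. If `β` already satisfies `δ β = z` in degrees
`> p`, then `z - δ β` is a cocycle vanishing above `p`, so its component in degree `p` is a
cycle of `Hom(K_p, L)`; exactness of that complex lifts it, and adding the lift to `β` in
degree `p` makes `δ β = z` hold in degree `p` without changing `β` in degrees `> p`. The limit
of these approximations is the required primitive.
-/

open CategoryTheory Limits

namespace CochainComplex.HomComplex

variable {C : Type*} [Category* C] [Preadditive C] {K L : CochainComplex C ℤ}

/-- The complexes `Hom(K_p, L)` are exact for all `p`. -/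
def LevelwiseHomExact (K L : CochainComplex C ℤ) : Prop :=
  ∀ (p q : ℤ) (f : K.X p ⟶ L.X q), f ≫ L.d q (q + 1) = 0 →
    ∃ g : K.X p ⟶ L.X (q - 1), g ≫ L.d (q - 1) q = f

def Cochain.EqFrom {n : ℤ} (α β : Cochain K L n) (p₀ : ℤ) : Prop :=
  ∀ (p q : ℤ) (hpq : p + n = q), p₀ ≤ p → α.v p q hpq = β.v p q hpq

variable {n m : ℤ}

lemma exists_eqFrom_δ_add_single (hKL : LevelwiseHomExact K L) (hnm : m + 1 = n)
    (z : Cochain K L n) (hz : δ n (n + 1) z = 0) (β : Cochain K L m) (p : ℤ)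
    (hβ : (δ m n β).EqFrom z (p + 1)) :
    ∃ g : K.X p ⟶ L.X (p + n - 1), (δ m n (β + Cochain.single g m)).EqFrom z p := by
  obtain ⟨w, hw⟩ : ∃ w, w = z - δ m n β := ⟨_, rfl⟩
  have hδw : δ n (n + 1) w = 0 := by rw [hw, δ_sub, hz, δ_δ, sub_zero]
  have hw_above (p' q : ℤ) (hpq : p' + n = q) (hp' : p + 1 ≤ p') : w.v p' q hpq = 0 := by
    rw [hw, Cochain.sub_v, hβ p' q hpq hp', sub_self]
  have hw_cycle : w.v p (p + n) rfl ≫ L.d (p + n) (p + n + 1) = 0 := by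
    have := Cochain.congr_v hδw p (p + n + 1) (by omega)
    rwa [δ_v n (n + 1) rfl w p (p + n + 1) _ (p + n) (p + 1) (by omega) rfl, Cochain.zero_v,
      hw_above (p + 1) _ _ le_rfl, comp_zero, smul_zero, add_zero] at this
  obtain ⟨g, hg⟩ := hKL p (p + n) _ hw_cycle
  refine ⟨g, fun p' q hpq hp' => ?_⟩
  rw [δ_add, Cochain.δ_single g m n hnm (p - 1) (p + n) (by omega) (by omega), Cochain.add_v,
    Cochain.add_v, Cochain.units_smul_v]
  obtain rfl | hp' := hp'.eq_or_lt
  · obtain rfl : q = p + n := by omega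
    rw [Cochain.single_v, hg, Cochain.single_v_eq_zero _ _ _ _ _ (by omega), smul_zero,
      add_zero, hw, Cochain.sub_v, add_sub_cancel]
  · rw [Cochain.single_v_eq_zero _ _ _ _ _ (by omega),
      Cochain.single_v_eq_zero _ _ _ _ _ (by omega), smul_zero, add_zero, add_zero,
      hβ p' q hpq (by omega)]

noncomputable def coboundaryApprox (hKL : LevelwiseHomExact K L) (hnm : m + 1 = n)
    (z : Cochain K L n) (hz : δ n (n + 1) z = 0) (M : ℤ) (hM : z.EqFrom 0 M) :
    ∀ p : ℤ, {β : Cochain K L m // (δ m n β).EqFrom z p}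
  | p =>
    if hp : M ≤ p then ⟨0, fun p' q hpq hp' => by
      rw [δ_zero, hM p' q hpq (hp.trans hp'), Cochain.zero_v]⟩
    else
      let β := coboundaryApprox hKL hnm z hz M hM (p + 1)
      let hg := exists_eqFrom_δ_add_single hKL hnm z hz β.1 p β.2
      ⟨β.1 + Cochain.single hg.choose m, hg.choose_spec⟩
  termination_by p => (M - p).toNat

lemma coboundaryApprox_v_succ (hKL : LevelwiseHomExact K L) (hnm : m + 1 = n)
    (z : Cochain K L n) (hz : δ n (n + 1) z = 0) (M : ℤ) (hM : z.EqFrom 0 M) (p q : ℤ)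
    (hpq : p + 1 + m = q) :
    (coboundaryApprox hKL hnm z hz M hM p).1.v (p + 1) q hpq =
      (coboundaryApprox hKL hnm z hz M hM (p + 1)).1.v (p + 1) q hpq := by
  rw [coboundaryApprox]
  split_ifs with hp
  · rw [coboundaryApprox, dif_pos (by omega)]
  · rw [Cochain.add_v, Cochain.single_v_eq_zero _ _ _ _ _ (by omega), add_zero]

lemma exists_δ_eq_of_eqFrom_zero (hKL : LevelwiseHomExact K L) (hnm : m + 1 = n)
    (z : Cochain K L n) (hz : δ n (n + 1) z = 0) (M : ℤ) (hM : z.EqFrom 0 M) :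
    ∃ β : Cochain K L m, δ m n β = z := by
  let β := coboundaryApprox hKL hnm z hz M hM
  refine ⟨Cochain.mk fun p q hpq => (β p).1.v p q hpq, ?_⟩
  ext p q hpq
  rw [← (β p).2 p q hpq le_rfl, δ_v m n hnm _ p q hpq (q - 1) (p + 1) rfl rfl,
    δ_v m n hnm _ p q hpq (q - 1) (p + 1) rfl rfl, Cochain.mk_v, Cochain.mk_v,
    coboundaryApprox_v_succ]

lemma exactAt_of_forall_exists_δ_eq (n : ℤ)
    (h : ∀ z : Cochain K L n, δ n (n + 1) z = 0 →
      ∃ β : Cochain K L (n - 1), δ (n - 1) n β = z) :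
    (HomComplex K L).ExactAt n := by
  rw [HomologicalComplex.exactAt_iff' _ (n - 1) n (n + 1) (by simp) (by simp),
    ShortComplex.ab_exact_iff]
  exact h

lemma levelwiseHomExact_of_linearMap {R : Type*} [Ring R] {K L : CochainComplex (ModuleCat R) ℤ}
    (h : ∀ (p q : ℤ) (f : K.X p →ₗ[R] L.X q), (L.d q (q + 1)).hom.comp f = 0 →
      ∃ g : K.X p →ₗ[R] L.X (q - 1), (L.d (q - 1) q).hom.comp g = f) :
    LevelwiseHomExact K L := fun p q f hf => by
  obtain ⟨g, hg⟩ := h p q f.hom (by rw [← ModuleCat.hom_comp, hf, ModuleCat.hom_zero])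
  exact ⟨ModuleCat.ofHom g, by ext1; exact hg⟩

end CochainComplex.HomComplex

-- Complexes are indexed cohomologically, so "bounded on the right" means vanishing in all
-- large degrees.
open CochainComplex.HomComplex in
/-- Let `X, Y` be complexes of `R`-modules (written cohomologically, so that a complex
is "right-bounded" in the homological sense when its components vanish in all
sufficiently large cohomological degrees), with either `X` or `Y` right-bounded.
If the complex `Hom_R(X_l, Y)` is exact for every `l`, then the total Hom complex
`Hom_R(X, Y)` is exact. -/
theorem homComplex_exact_of_levelwise_exact
    (R : Type) [Ring R] (X Y : CochainComplex (ModuleCat.{0} R) ℤ)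
    (hbd : (∃ N : ℤ, ∀ n : ℤ, N ≤ n → IsZero (X.X n)) ∨
           (∃ N : ℤ, ∀ n : ℤ, N ≤ n → IsZero (Y.X n)))
    (hexact : ∀ (l n : ℤ) (f : X.X l →ₗ[R] Y.X n),
      ((Y.d n (n + 1)).hom : Y.X n →ₗ[R] Y.X (n + 1)).comp f = 0 →
        ∃ g : X.X l →ₗ[R] Y.X (n - 1),
          ((Y.d (n - 1) n).hom : Y.X (n - 1) →ₗ[R] Y.X n).comp g = f) :
    ∀ n : ℤ, (CochainComplex.HomComplex X Y).ExactAt n := by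
  intro n
  refine exactAt_of_forall_exists_δ_eq n fun z hz => ?_
  obtain ⟨M, hM⟩ : ∃ M, z.EqFrom 0 M := by
    rcases hbd with ⟨N, hX⟩ | ⟨N, hY⟩
    · exact ⟨N, fun p q _ hp => (hX p hp).eq_of_src _ _⟩
    · exact ⟨N - n, fun p q _ hp => (hY q (by omega)).eq_of_tgt _ _⟩
  exact exists_δ_eq_of_eqFrom_zero (levelwiseHomExact_of_linearMap hexact) (by omega) z hz M hM
end
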